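/- arXiv:1901.04046 — 3 statements merged into one kernel-verified Lean document; each statement's English description precedes it below -/
import Mathlib

section
/- For any fixed σ > 0 and x̄ = (z̄, λ̄, v̄) ∈ ℝⁿ × ℝᵐ × ℝ^q, define R : ℝⁿ × ℝᵐ × ℝ^q → ℝ^{n+m+q} by R(z,λ,v) = (Hz + f + Gᵀλ + Aᵀv + σ(z − z̄), h − Gz + σ(λ − λ̄), (φ(y_j, v_j))_{j=1,…,q}) where y = b − Az + σ(v − v̄). Then the merit function θ(x) = ½‖R(x)‖₂² is continuously differentiable on ℝⁿ × ℝᵐ × ℝ^q. -/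
/-!
The only nonsmooth ingredient is the penalized Fischer–Burmeister function `φ`. It is locally
Lipschitz, and its kinks lie on the complementarity set `{a ≥ 0, b ≥ 0, a b = 0}`, where `φ`
vanishes; so `φ` is `C¹` near every point where it does not vanish. For such a function `g`,
`g²` is `C¹`: away from the zeros its derivative is `2 g Dg`, while at a zero `x` local Lipschitz
continuity gives `g(y)² ≤ K² ‖y - x‖²` and `‖2 g(y) Dg(y)‖ ≤ 2 K |g(y)| → 0`. The merit function
is a sum of squares of affine maps and of `φ²` composed with affine maps.
-/

open Filter Topology Asymptotics Matrix

section
variable {E : Type*} [NormedAddCommGroup E] [NormedSpace ℝ E] {g : E → ℝ} {K : NNReal} {s : Set E}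
  {x : E}

theorem LipschitzOnWith.hasFDerivAt_sq_of_eq_zero (hK : LipschitzOnWith K g s) (hs : s ∈ 𝓝 x)
    (hx : g x = 0) : HasFDerivAt (fun y => g y ^ 2) (0 : E →L[ℝ] ℝ) x := by
  refine IsBigO.hasFDerivAt (n := 2) (IsBigO.of_bound ((K : ℝ) ^ 2) ?_) one_lt_two
  filter_upwards [hs] with y hy
  have hgy : |g y| ≤ K * ‖y - x‖ := by
    simpa [hx] using lipschitzOnWith_iff_norm_sub_le.1 hK hy (mem_of_mem_nhds hs)
  simp only [norm_pow, Real.norm_eq_abs, abs_norm]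
  calc |g y| ^ 2 ≤ (K * ‖y - x‖) ^ 2 := pow_le_pow_left₀ (abs_nonneg _) hgy 2
    _ = K ^ 2 * ‖y - x‖ ^ 2 := mul_pow _ _ _

theorem LipschitzOnWith.tendsto_two_mul_smul_fderiv_of_eq_zero (hK : LipschitzOnWith K g s) (hs : s ∈ 𝓝 x)
    (hx : g x = 0) : Tendsto (fun y => (2 * g y) • fderiv ℝ g y) (𝓝 x) (𝓝 0) := by
  have hg : Tendsto g (𝓝 x) (𝓝 0) := hx ▸ (hK.continuousOn.continuousAt hs).tendsto
  refine squeeze_zero_norm' (a := fun y => 2 * ‖g y‖ * K) ?_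
    (by simpa using (hg.norm.const_mul 2).mul_const (K : ℝ))
  filter_upwards [eventually_eventually_nhds.2 hs] with y hy
  rw [norm_smul, norm_mul, Real.norm_two]
  exact mul_le_mul_of_nonneg_left (norm_fderiv_le_of_lipschitzOn ℝ hy hK) (by positivity)

theorem contDiff_sq_of_locallyLipschitz (hg : LocallyLipschitz g)
    (hdiff : ∀ x, g x ≠ 0 → ContDiffAt ℝ 1 g x) : ContDiff ℝ 1 fun x => g x ^ 2 := by
  rw [contDiff_one_iff_hasFDerivAt]
  refine ⟨fun x => (2 * g x) • fderiv ℝ g x, continuous_iff_continuousAt.2 fun x => ?_, fun x => ?_⟩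
  all_goals
    obtain ⟨K, s, hs, hK⟩ := hg x
    by_cases hx : g x = 0
  · simpa [ContinuousAt, hx] using hK.tendsto_two_mul_smul_fderiv_of_eq_zero hs hx
  · exact (continuousAt_const.mul (hdiff x hx).continuousAt).smul
      ((hdiff x hx).continuousAt_fderiv one_ne_zero)
  · simpa [hx] using hK.hasFDerivAt_sq_of_eq_zero hs hx
  · simpa using ((hdiff x hx).differentiableAt one_ne_zero).hasFDerivAt.pow 2
end

noncomputable def fischerBurmeister (p : ℝ × ℝ) : ℝ := p.1 + p.2 - √(p.1 ^ 2 + p.2 ^ 2)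

noncomputable def penalizedFischerBurmeister (α : ℝ) (p : ℝ × ℝ) : ℝ :=
  α * fischerBurmeister p + (1 - α) * max p.1 0 * max p.2 0

theorem lipschitzWith_fischerBurmeister : ∃ K, LipschitzWith K fischerBurmeister := by
  let e : ℝ × ℝ →L[ℝ] ℂ := Complex.equivRealProdCLM.symm
  have hnorm : fischerBurmeister = fun p => p.1 + p.2 - ‖e p‖ := by
    funext p
    simp [fischerBurmeister, e, Complex.norm_def, Complex.normSq_apply, pow_two]
  rw [hnorm]
  exact ⟨_, (LipschitzWith.prod_fst.add LipschitzWith.prod_snd).sub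
    (lipschitzWith_one_norm.comp e.lipschitz)⟩

theorem locallyLipschitz_penalizedFischerBurmeister (α : ℝ) :
    LocallyLipschitz (penalizedFischerBurmeister α) := by
  obtain ⟨K, hK⟩ := lipschitzWith_fischerBurmeister
  have hΨ : ContDiff ℝ 1 fun u : ℝ × ℝ × ℝ => α * u.1 + (1 - α) * u.2.1 * u.2.2 := by fun_prop
  exact hΨ.locallyLipschitz.comp <| hK.locallyLipschitz.prodMk <|
    (LipschitzWith.prod_fst.max_const 0).locallyLipschitz.prodMk
      (LipschitzWith.prod_snd.max_const 0).locallyLipschitz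

theorem contDiffAt_fischerBurmeister {p : ℝ × ℝ} (hp : p ≠ 0) :
    ContDiffAt ℝ 1 fischerBurmeister p := by
  have hpos : p.1 ^ 2 + p.2 ^ 2 ≠ 0 := by
    contrapose! hp
    obtain ⟨h1, h2⟩ := (add_eq_zero_iff_of_nonneg (sq_nonneg _) (sq_nonneg _)).1 hp
    exact Prod.ext (pow_eq_zero_iff two_ne_zero |>.1 h1) (pow_eq_zero_iff two_ne_zero |>.1 h2)
  unfold fischerBurmeister
  exact (by fun_prop : ContDiffAt ℝ 1 (fun p : ℝ × ℝ => p.1 + p.2) p).sub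
    (ContDiffAt.sqrt (by fun_prop) hpos)

theorem contDiffAt_max_mul_max {p : ℝ × ℝ} (hp : ¬(0 ≤ p.1 ∧ 0 ≤ p.2 ∧ p.1 * p.2 = 0)) :
    ContDiffAt ℝ 1 (fun p : ℝ × ℝ => max p.1 0 * max p.2 0) p := by
  rcases lt_or_ge p.1 0 with h1 | h1
  · refine (contDiffAt_const (c := (0 : ℝ))).congr_of_eventuallyEq ?_
    filter_upwards [continuous_fst.continuousAt.eventually_lt continuousAt_const h1] with q hq
    simp [max_eq_right hq.le]
  rcases lt_or_ge p.2 0 with h2 | h2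
  · refine (contDiffAt_const (c := (0 : ℝ))).congr_of_eventuallyEq ?_
    filter_upwards [continuous_snd.continuousAt.eventually_lt continuousAt_const h2] with q hq
    simp [max_eq_right hq.le]
  have h12 : 0 < p.1 ∧ 0 < p.2 := by
    simp only [h1, h2, true_and, mul_eq_zero, not_or] at hp
    exact ⟨h1.lt_of_ne' hp.1, h2.lt_of_ne' hp.2⟩
  refine (by fun_prop : ContDiffAt ℝ 1 (fun p : ℝ × ℝ => p.1 * p.2) p).congr_of_eventuallyEq ?_
  filter_upwards [continuousAt_const.eventually_lt continuous_fst.continuousAt h12.1,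
    continuousAt_const.eventually_lt continuous_snd.continuousAt h12.2] with q hq1 hq2
  simp [max_eq_left hq1.le, max_eq_left hq2.le]

theorem fischerBurmeister_eq_zero {p : ℝ × ℝ} (h1 : 0 ≤ p.1) (h2 : 0 ≤ p.2) (h12 : p.1 * p.2 = 0) :
    fischerBurmeister p = 0 := by
  have : p.1 ^ 2 + p.2 ^ 2 = (p.1 + p.2) ^ 2 := by linear_combination -2 * h12
  rw [fischerBurmeister, this, Real.sqrt_sq (add_nonneg h1 h2), sub_self]

theorem contDiffAt_penalizedFischerBurmeister {α : ℝ} {p : ℝ × ℝ}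
    (hp : penalizedFischerBurmeister α p ≠ 0) : ContDiffAt ℝ 1 (penalizedFischerBurmeister α) p := by
  have hS : ¬(0 ≤ p.1 ∧ 0 ≤ p.2 ∧ p.1 * p.2 = 0) := by
    rintro ⟨h1, h2, h12⟩
    refine hp ?_
    rw [penalizedFischerBurmeister, fischerBurmeister_eq_zero h1 h2 h12, max_eq_left h1,
      max_eq_left h2, mul_assoc, h12]
    ring
  have hp0 : p ≠ 0 := by
    rintro rfl
    exact hS ⟨le_rfl, le_rfl, mul_zero 0⟩
  have := (contDiffAt_const (c := α)).mul (contDiffAt_fischerBurmeister hp0) |>.add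
    ((contDiffAt_const (c := 1 - α)).mul (contDiffAt_max_mul_max hS))
  refine this.congr_of_eventuallyEq (Eventually.of_forall fun q => ?_)
  simp only [penalizedFischerBurmeister, mul_assoc]

theorem contDiff_penalizedFischerBurmeister_sq (α : ℝ) :
    ContDiff ℝ 1 fun p => penalizedFischerBurmeister α p ^ 2 :=
  contDiff_sq_of_locallyLipschitz (locallyLipschitz_penalizedFischerBurmeister α)
    fun _ => contDiffAt_penalizedFischerBurmeister

@[fun_prop]
theorem ContDiff.matrix_mulVec {𝕜 E ι κ : Type*} [NontriviallyNormedField 𝕜] [NormedAddCommGroup E]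
    [NormedSpace 𝕜 E] [Fintype ι] [Fintype κ] {n : WithTop ℕ∞} (M : Matrix κ ι 𝕜) {g : E → ι → 𝕜}
    (hg : ContDiff 𝕜 n g) : ContDiff 𝕜 n fun x => M *ᵥ g x :=
  contDiff_pi.2 fun _ => ContDiff.sum fun l _ => contDiff_const.mul (contDiff_pi.1 hg l)

theorem merit_function_contDiff_general (n m q : ℕ)
    (H : Matrix (Fin n) (Fin n) ℝ)
    (f : Fin n → ℝ) (G : Matrix (Fin m) (Fin n) ℝ) (h : Fin m → ℝ)
    (A : Matrix (Fin q) (Fin n) ℝ) (b : Fin q → ℝ)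
    (α : ℝ)
    (σ : ℝ)
    (zbar : Fin n → ℝ) (lbar : Fin m → ℝ) (vbar : Fin q → ℝ) :
    ContDiff ℝ 1 (fun x : (Fin n → ℝ) × (Fin m → ℝ) × (Fin q → ℝ) =>
      (1 / 2) *
        ((∑ i, ((H.mulVec x.1 + f + Gᵀ.mulVec x.2.1 + Aᵀ.mulVec x.2.2 +
            σ • (x.1 - zbar)) i) ^ 2) +
         (∑ i, ((h - G.mulVec x.1 + σ • (x.2.1 - lbar)) i) ^ 2) +
         (∑ j, (α * ((b - A.mulVec x.1 + σ • (x.2.2 - vbar)) j + x.2.2 j -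
              Real.sqrt (((b - A.mulVec x.1 + σ • (x.2.2 - vbar)) j) ^ 2 + (x.2.2 j) ^ 2)) +
            (1 - α) * max ((b - A.mulVec x.1 + σ • (x.2.2 - vbar)) j) 0 *
              max (x.2.2 j) 0) ^ 2))) := by
  have hz : ContDiff ℝ 1 fun x : (Fin n → ℝ) × (Fin m → ℝ) × (Fin q → ℝ) =>
      H *ᵥ x.1 + f + Gᵀ *ᵥ x.2.1 + Aᵀ *ᵥ x.2.2 + σ • (x.1 - zbar) := by fun_prop
  have hl : ContDiff ℝ 1 fun x : (Fin n → ℝ) × (Fin m → ℝ) × (Fin q → ℝ) =>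
      h - G *ᵥ x.1 + σ • (x.2.1 - lbar) := by fun_prop
  have hy : ContDiff ℝ 1 fun x : (Fin n → ℝ) × (Fin m → ℝ) × (Fin q → ℝ) =>
      b - A *ᵥ x.1 + σ • (x.2.2 - vbar) := by fun_prop
  have hv : ContDiff ℝ 1 fun x : (Fin n → ℝ) × (Fin m → ℝ) × (Fin q → ℝ) => x.2.2 := by fun_prop
  exact contDiff_const.mul <|
    ((ContDiff.sum fun i _ => (contDiff_pi.1 hz i).pow 2).add
      (ContDiff.sum fun i _ => (contDiff_pi.1 hl i).pow 2)).add
    (ContDiff.sum fun j _ => (contDiff_penalizedFischerBurmeister_sq α).comp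
      ((contDiff_pi.1 hy j).prodMk (contDiff_pi.1 hv j)))

/-- The merit function `θ(x) = ½‖R(x)‖₂²` associated with the penalized
Fischer–Burmeister reformulation of the proximal subproblem is continuously
differentiable on `ℝⁿ × ℝᵐ × ℝ^q`. -/
theorem merit_function_contDiff (n m q : ℕ)
    (H : Matrix (Fin n) (Fin n) ℝ) (hH : H.PosSemidef)
    (f : Fin n → ℝ) (G : Matrix (Fin m) (Fin n) ℝ) (h : Fin m → ℝ)
    (A : Matrix (Fin q) (Fin n) ℝ) (b : Fin q → ℝ)
    (α : ℝ) (hα : α ∈ Set.Ioo (0:ℝ) 1)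
    (σ : ℝ) (hσ : 0 < σ)
    (zbar : Fin n → ℝ) (lbar : Fin m → ℝ) (vbar : Fin q → ℝ) :
    ContDiff ℝ 1 (fun x : (Fin n → ℝ) × (Fin m → ℝ) × (Fin q → ℝ) =>
      (1 / 2) *
        ((∑ i, ((H.mulVec x.1 + f + Gᵀ.mulVec x.2.1 + Aᵀ.mulVec x.2.2 +
            σ • (x.1 - zbar)) i) ^ 2) +
         (∑ i, ((h - G.mulVec x.1 + σ • (x.2.1 - lbar)) i) ^ 2) +
         (∑ j, (α * ((b - A.mulVec x.1 + σ • (x.2.2 - vbar)) j + x.2.2 j -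
              Real.sqrt (((b - A.mulVec x.1 + σ • (x.2.2 - vbar)) j) ^ 2 + (x.2.2 j) ^ 2)) +
            (1 - α) * max ((b - A.mulVec x.1 + σ • (x.2.2 - vbar)) j) 0 *
              max (x.2.2 j) 0) ^ 2))) :=
  merit_function_contDiff_general n m q H f G h A b α σ zbar lbar vbar
end

section
/- Under the stated proximal-iterate hypotheses, the limit direction satisfies hᵀδλ + bᵀδv = −σ(‖δλ‖₂² + ‖δv‖₂²), and in particular hᵀδλ + bᵀδv ≤ 0. -/
/-!
Dividing the stationarity equation by `k` gives `H δz + Gᵀ δλ + Aᵀ δv = 0`. The pairing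
`(Gᵀ δλ + Aᵀ δv) ⬝ᵥ z (k + 1) = δλ ⬝ᵥ G z (k + 1) + δv ⬝ᵥ A z (k + 1)` tends to
`h ⬝ᵥ δλ + b ⬝ᵥ δv + σ (‖δλ‖² + ‖δv‖²)`, because `δv` is eventually orthogonal to the slack:
where `δv` is positive, the multiplier `v (k + 1)` is eventually positive, so by complementarity
the slack vanishes there.
Since `z (k + 1) ≈ k δz`, a convergent pairing forces `δz ⬝ᵥ H δz = 0`, so `H δz = 0` by
semidefiniteness and the pairing vanishes identically.
-/

open Matrix Filter Topology

section Continuity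

variable {γ α β R : Type*} [Fintype β] [NonUnitalNonAssocSemiring R] [TopologicalSpace R]
  [IsTopologicalSemiring R] {l : Filter γ} {x : γ → β → R} {X : β → R}

theorem Filter.Tendsto.const_dotProduct (w : β → R) (hx : Tendsto x l (𝓝 X)) :
    Tendsto (fun k => w ⬝ᵥ x k) l (𝓝 (w ⬝ᵥ X)) :=
  ((continuous_const.dotProduct continuous_id).tendsto X).comp hx

theorem Filter.Tendsto.const_mulVec (M : Matrix α β R) (hx : Tendsto x l (𝓝 X)) :
    Tendsto (fun k => M *ᵥ x k) l (𝓝 (M *ᵥ X)) :=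
  ((continuous_const.matrix_mulVec continuous_id).tendsto X).comp hx

end Continuity

theorem Filter.Tendsto.one_div_smul_succ {E : Type*} [AddCommGroup E] [Module ℝ E]
    [TopologicalSpace E] [ContinuousSMul ℝ E] {u : ℕ → E} {L : E}
    (hu : Tendsto (fun k : ℕ => (1 / (k : ℝ)) • u k) atTop (𝓝 L)) :
    Tendsto (fun k : ℕ => (1 / (k : ℝ)) • u (k + 1)) atTop (𝓝 L) := by
  have hshift : Tendsto (fun k : ℕ => (1 / ((k : ℝ) + 1)) • u (k + 1)) atTop (𝓝 L) := by
    simpa using (tendsto_add_atTop_iff_nat 1).2 hu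
  have hratio : Tendsto (fun k : ℕ => 1 + 1 / (k : ℝ)) atTop (𝓝 1) := by
    simpa using tendsto_one_div_atTop_nhds_zero_nat.const_add (1 : ℝ)
  refine (one_smul ℝ L ▸ hratio.smul hshift).congr' ?_
  filter_upwards [eventually_ne_atTop 0] with k hk
  rw [smul_smul]
  congr 1
  field_simp

theorem eventually_pos_of_tendsto_one_div_mul {x : ℕ → ℝ} {d : ℝ}
    (hx : Tendsto (fun k : ℕ => 1 / (k : ℝ) * x k) atTop (𝓝 d)) (hd : 0 < d) :
    ∀ᶠ k in atTop, 0 < x k :=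
  (hx.eventually (lt_mem_nhds hd)).mono fun _ hk => pos_of_mul_pos_right hk (by positivity)

theorem mul_eq_zero_of_dotProduct_eq_zero {ι R : Type*} [Fintype ι] [Semiring R]
    [PartialOrder R] [IsOrderedRing R] {s v : ι → R} (hs : 0 ≤ s) (hv : 0 ≤ v)
    (hsv : s ⬝ᵥ v = 0) (i : ι) : s i * v i = 0 :=
  (Finset.sum_eq_zero_iff_of_nonneg fun j _ => mul_nonneg (hs j) (hv j)).1 hsv i
    (Finset.mem_univ i)

theorem eventually_dotProduct_eq_zero_of_complementary {ι : Type*} [Fintype ι]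
    {s v : ℕ → ι → ℝ} {d : ι → ℝ} (hs : ∀ k, 0 ≤ s k) (hv : ∀ k, 0 ≤ v k)
    (hsv : ∀ k, s k ⬝ᵥ v k = 0)
    (hd : Tendsto (fun k : ℕ => (1 / (k : ℝ)) • v k) atTop (𝓝 d)) :
    ∀ᶠ k in atTop, d ⬝ᵥ s k = 0 := by
  have hd_nonneg : 0 ≤ d := ge_of_tendsto' hd fun k => smul_nonneg (by positivity) (hv k)
  have hterm : ∀ i, ∀ᶠ k in atTop, d i * s k i = 0 := by
    intro i
    rcases (hd_nonneg i).eq_or_lt with hdi | hdi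
    · exact Eventually.of_forall fun k => by simp [← hdi]
    · filter_upwards [eventually_pos_of_tendsto_one_div_mul (tendsto_pi_nhds.1 hd i) hdi]
        with k hk
      have hsvi := mul_eq_zero_of_dotProduct_eq_zero (hs k) (hv k) (hsv k) i
      rw [(mul_eq_zero.1 hsvi).resolve_right hk.ne', mul_zero]
  filter_upwards [eventually_all.2 hterm] with k hk
  exact Finset.sum_eq_zero fun i _ => hk i

theorem dotProduct_eq_zero_of_tendsto {ι : Type*} [Fintype ι] {w d : ι → ℝ}
    {z : ℕ → ι → ℝ} {S : ℝ} (hS : Tendsto (fun k => w ⬝ᵥ z k) atTop (𝓝 S))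
    (hd : Tendsto (fun k : ℕ => (1 / (k : ℝ)) • z k) atTop (𝓝 d)) : w ⬝ᵥ d = 0 := by
  have hscaled := hd.const_dotProduct w
  have hzero := tendsto_one_div_atTop_nhds_zero_nat.mul hS
  rw [zero_mul] at hzero
  refine tendsto_nhds_unique hscaled (hzero.congr fun k => ?_)
  simp [dotProduct_smul]

section ProximalIterates

variable {ι κ μ : Type*} [Fintype ι] [Fintype κ] [Fintype μ]

theorem limit_direction_stationary (H : Matrix ι ι ℝ) (f : ι → ℝ) (G : Matrix κ ι ℝ)
    (A : Matrix μ ι ℝ) (σ : ℝ) (z : ℕ → ι → ℝ) (lam : ℕ → κ → ℝ) (v : ℕ → μ → ℝ)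
    (heq : ∀ k : ℕ, H *ᵥ z (k + 1) + f + Gᵀ *ᵥ lam (k + 1) + Aᵀ *ᵥ v (k + 1) +
      σ • (z (k + 1) - z k) = 0)
    {δz : ι → ℝ} {δlam : κ → ℝ} {δv : μ → ℝ}
    (hz : Tendsto (fun k : ℕ => (1 / (k : ℝ)) • z k) atTop (𝓝 δz))
    (hlam : Tendsto (fun k : ℕ => (1 / (k : ℝ)) • lam k) atTop (𝓝 δlam))
    (hv : Tendsto (fun k : ℕ => (1 / (k : ℝ)) • v k) atTop (𝓝 δv)) :
    H *ᵥ δz + Gᵀ *ᵥ δlam + Aᵀ *ᵥ δv = 0 := by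
  have hlhs := ((hz.one_div_smul_succ.const_mulVec H).add
    (hlam.one_div_smul_succ.const_mulVec Gᵀ)).add (hv.one_div_smul_succ.const_mulVec Aᵀ)
  have hrhs : Tendsto (fun k : ℕ => -((1 / (k : ℝ)) • f) -
      σ • ((1 / (k : ℝ)) • z (k + 1) - (1 / (k : ℝ)) • z k)) atTop (𝓝 0) := by
    simpa using (((tendsto_one_div_atTop_nhds_zero_nat (𝕜 := ℝ)).smul_const f).neg).sub
      ((hz.one_div_smul_succ.sub hz).const_smul σ)
  refine tendsto_nhds_unique hlhs (hrhs.congr fun k => ?_)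
  simp only [mulVec_smul]
  linear_combination (norm := module) -(1 / (k : ℝ)) • heq k

theorem tendsto_transpose_mulVec_dotProduct_iterate (G : Matrix κ ι ℝ) (h : κ → ℝ)
    (A : Matrix μ ι ℝ) (b : μ → ℝ) (σ : ℝ) (z : ℕ → ι → ℝ) (lam : ℕ → κ → ℝ)
    (v : ℕ → μ → ℝ) (heq : ∀ k : ℕ, h - G *ᵥ z (k + 1) + σ • (lam (k + 1) - lam k) = 0)
    {δlam : κ → ℝ} {δv : μ → ℝ}
    (hcompl : ∀ᶠ k in atTop, δv ⬝ᵥ (b - A *ᵥ z (k + 1) + σ • (v (k + 1) - v k)) = 0)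
    (hlam : Tendsto (fun k => lam (k + 1) - lam k) atTop (𝓝 δlam))
    (hv : Tendsto (fun k => v (k + 1) - v k) atTop (𝓝 δv)) :
    Tendsto (fun k => (Gᵀ *ᵥ δlam + Aᵀ *ᵥ δv) ⬝ᵥ z (k + 1)) atTop
      (𝓝 (h ⬝ᵥ δlam + b ⬝ᵥ δv + σ * (δlam ⬝ᵥ δlam + δv ⬝ᵥ δv))) := by
  have hlim := tendsto_const_nhds (x := δlam ⬝ᵥ h + δv ⬝ᵥ b) |>.add
    (((hlam.const_dotProduct δlam).add (hv.const_dotProduct δv)).const_mul σ)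
  rw [dotProduct_comm δlam, dotProduct_comm δv] at hlim
  refine hlim.congr' ?_
  filter_upwards [hcompl] with k hk
  have hGz : G *ᵥ z (k + 1) = h + σ • (lam (k + 1) - lam k) := by
    linear_combination (norm := module) -heq k
  set s := b - A *ᵥ z (k + 1) + σ • (v (k + 1) - v k) with hs
  have hAz : A *ᵥ z (k + 1) = b + σ • (v (k + 1) - v k) - s := by
    rw [hs]
    abel
  rw [add_dotProduct, mulVec_transpose, mulVec_transpose, ← dotProduct_mulVec,
    ← dotProduct_mulVec, hGz, hAz, dotProduct_sub δv _ s, hk]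
  simp only [dotProduct_add, dotProduct_smul, smul_eq_mul, dotProduct_comm δlam h,
    dotProduct_comm δv b]
  ring

end ProximalIterates

theorem prox_limit_direction_dual_descent_general (n m q : ℕ)
    (H : Matrix (Fin n) (Fin n) ℝ) (hH : H.PosSemidef)
    (f : Fin n → ℝ) (G : Matrix (Fin m) (Fin n) ℝ) (h : Fin m → ℝ)
    (A : Matrix (Fin q) (Fin n) ℝ) (b : Fin q → ℝ)
    (σ : ℝ) (hσ : 0 < σ)
    (z : ℕ → Fin n → ℝ) (lam : ℕ → Fin m → ℝ) (v : ℕ → Fin q → ℝ)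
    (heq1 : ∀ k : ℕ, H.mulVec (z (k + 1)) + f + Gᵀ.mulVec (lam (k + 1)) +
      Aᵀ.mulVec (v (k + 1)) + σ • (z (k + 1) - z k) = 0)
    (heq2 : ∀ k : ℕ, h - G.mulVec (z (k + 1)) + σ • (lam (k + 1) - lam k) = 0)
    (heq3 : ∀ k : ℕ, (b - A.mulVec (z (k + 1)) + σ • (v (k + 1) - v k)) ⬝ᵥ v (k + 1) = 0)
    (heq4 : ∀ k : ℕ, 0 ≤ v (k + 1))
    (heq5 : ∀ k : ℕ, 0 ≤ b - A.mulVec (z (k + 1)) + σ • (v (k + 1) - v k))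
    (δz : Fin n → ℝ) (δlam : Fin m → ℝ) (δv : Fin q → ℝ)
    (hd2 : Tendsto (fun k => lam (k + 1) - lam k) atTop (𝓝 δlam))
    (hd3 : Tendsto (fun k => v (k + 1) - v k) atTop (𝓝 δv))
    (ha1 : Tendsto (fun k : ℕ => (1 / (k : ℝ)) • z k) atTop (𝓝 δz))
    (ha2 : Tendsto (fun k : ℕ => (1 / (k : ℝ)) • lam k) atTop (𝓝 δlam))
    (ha3 : Tendsto (fun k : ℕ => (1 / (k : ℝ)) • v k) atTop (𝓝 δv)) :
    h ⬝ᵥ δlam + b ⬝ᵥ δv = -σ * (δlam ⬝ᵥ δlam + δv ⬝ᵥ δv) ∧ h ⬝ᵥ δlam + b ⬝ᵥ δv ≤ 0 := by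
  have hcompl := eventually_dotProduct_eq_zero_of_complementary heq5 heq4 heq3
    ha3.one_div_smul_succ
  have hpairing :=
    tendsto_transpose_mulVec_dotProduct_iterate G h A b σ z lam v heq2 hcompl hd2 hd3
  have hdual : Gᵀ *ᵥ δlam + Aᵀ *ᵥ δv = -(H *ᵥ δz) := by
    linear_combination (norm := module)
      limit_direction_stationary H f G A σ z lam v heq1 ha1 ha2 ha3
  have hHδz : H *ᵥ δz = 0 := by
    refine (hH.dotProduct_mulVec_zero_iff δz).1 ?_
    have hδz := dotProduct_eq_zero_of_tendsto hpairing ha1.one_div_smul_succ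
    rwa [hdual, neg_dotProduct, neg_eq_zero, dotProduct_comm, ← star_trivial δz] at hδz
  simp only [hdual, hHδz, neg_zero, zero_dotProduct] at hpairing
  have hsum := tendsto_nhds_unique hpairing tendsto_const_nhds
  have hidentity : h ⬝ᵥ δlam + b ⬝ᵥ δv = -σ * (δlam ⬝ᵥ δlam + δv ⬝ᵥ δv) := by linarith
  have hsq : 0 ≤ δlam ⬝ᵥ δlam + δv ⬝ᵥ δv :=
    add_nonneg (dotProduct_self_star_nonneg δlam) (dotProduct_self_star_nonneg δv)
  exact ⟨hidentity, hidentity ▸ mul_nonpos_of_nonpos_of_nonneg (neg_nonpos.2 hσ.le) hsq⟩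

/-- Under the proximal-iterate hypotheses,
`hᵀδλ + bᵀδv = −σ(‖δλ‖₂² + ‖δv‖₂²)`, and in particular `hᵀδλ + bᵀδv ≤ 0`. -/
theorem prox_limit_direction_dual_descent (n m q : ℕ)
    (H : Matrix (Fin n) (Fin n) ℝ) (hH : H.PosSemidef)
    (f : Fin n → ℝ) (G : Matrix (Fin m) (Fin n) ℝ) (h : Fin m → ℝ)
    (A : Matrix (Fin q) (Fin n) ℝ) (b : Fin q → ℝ)
    (σ : ℝ) (hσ : 0 < σ)
    (z : ℕ → Fin n → ℝ) (lam : ℕ → Fin m → ℝ) (v : ℕ → Fin q → ℝ)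
    (heq1 : ∀ k : ℕ, H.mulVec (z (k + 1)) + f + Gᵀ.mulVec (lam (k + 1)) +
      Aᵀ.mulVec (v (k + 1)) + σ • (z (k + 1) - z k) = 0)
    (heq2 : ∀ k : ℕ, h - G.mulVec (z (k + 1)) + σ • (lam (k + 1) - lam k) = 0)
    (heq3 : ∀ k : ℕ, (b - A.mulVec (z (k + 1)) + σ • (v (k + 1) - v k)) ⬝ᵥ v (k + 1) = 0)
    (heq4 : ∀ k : ℕ, 0 ≤ v (k + 1))
    (heq5 : ∀ k : ℕ, 0 ≤ b - A.mulVec (z (k + 1)) + σ • (v (k + 1) - v k))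
    (δz : Fin n → ℝ) (δlam : Fin m → ℝ) (δv : Fin q → ℝ)
    (hd1 : Tendsto (fun k => z (k + 1) - z k) atTop (𝓝 δz))
    (hd2 : Tendsto (fun k => lam (k + 1) - lam k) atTop (𝓝 δlam))
    (hd3 : Tendsto (fun k => v (k + 1) - v k) atTop (𝓝 δv))
    (ha1 : Tendsto (fun k : ℕ => (1 / (k : ℝ)) • z k) atTop (𝓝 δz))
    (ha2 : Tendsto (fun k : ℕ => (1 / (k : ℝ)) • lam k) atTop (𝓝 δlam))
    (ha3 : Tendsto (fun k : ℕ => (1 / (k : ℝ)) • v k) atTop (𝓝 δv)) :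
    h ⬝ᵥ δlam + b ⬝ᵥ δv = -σ * (δlam ⬝ᵥ δlam + δv ⬝ᵥ δv) ∧ h ⬝ᵥ δlam + b ⬝ᵥ δv ≤ 0 :=
  prox_limit_direction_dual_descent_general n m q H hH f G h A b σ hσ z lam v heq1 heq2 heq3 heq4
    heq5 δz δlam δv hd2 hd3 ha1 ha2 ha3
end

section
/- (Infeasibility detection, primal case) Under the stated proximal-iterate hypotheses, if (δλ, δv) ≠ (0, 0) then the primal QP is infeasible: there is no z ∈ ℝⁿ with Gz = h and Az ≤ b. Moreover (δλ, δv) is a certificate of primal infeasibility, i.e., δv ≥ 0, Gᵀδλ + Aᵀδv = 0, and hᵀδλ + bᵀδv < 0. -/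
/-!
Dividing the proximal optimality conditions by `k` and letting `k → ∞` gives `G δz = 0`,
`H δz + Gᵀ δλ + Aᵀ δv = 0` and `δv ≥ 0`. Complementarity forces the slack to vanish eventually
wherever `δv` is positive, so `(A δz) ⬝ δv = 0`; pairing the stationarity limit with `δz` then
gives `δzᵀ H δz = 0`, hence `H δz = 0` and `Gᵀ δλ + Aᵀ δv = 0`. Substituting the equality
constraint and the slack, `hᵀ δλ + bᵀ δv = -σ (Δλₖ ⬝ δλ + Δvₖ ⬝ δv)` for large `k`, and the limit
of the right-hand side is `-σ (‖δλ‖² + ‖δv‖²) < 0`. Such a certificate excludes feasibility by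
the easy half of Farkas' lemma.
-/

open Matrix Filter Topology

section Averages

variable {E : Type*} [AddCommGroup E] [Module ℝ E] [TopologicalSpace E] [ContinuousSMul ℝ E]

theorem tendsto_one_div_smul_const (c : E) :
    Tendsto (fun k : ℕ => (1 / (k : ℝ)) • c) atTop (𝓝 0) := by
  simpa using (tendsto_one_div_atTop_nhds_zero_nat (𝕜 := ℝ)).smul_const c

variable {x : ℕ → E} {a : E}

theorem Filter.Tendsto.one_div_smul_succ_s19
    (hx : Tendsto (fun k : ℕ => (1 / (k : ℝ)) • x k) atTop (𝓝 a)) :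
    Tendsto (fun k : ℕ => (1 / (k : ℝ)) • x (k + 1)) atTop (𝓝 a) := by
  have hshift : Tendsto (fun k : ℕ => (1 / ((k + 1 : ℕ) : ℝ)) • x (k + 1)) atTop (𝓝 a) :=
    hx.comp (tendsto_add_atTop_nat 1)
  have hratio : Tendsto (fun k : ℕ => 1 + 1 / (k : ℝ)) atTop (𝓝 1) := by
    simpa using tendsto_one_div_atTop_nhds_zero_nat.const_add (1 : ℝ)
  refine (one_smul ℝ a ▸ hratio.smul hshift).congr' ?_
  filter_upwards [eventually_ne_atTop 0] with k hk
  rw [smul_smul]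
  congr 1
  field_simp
  push_cast
  ring

theorem Filter.Tendsto.one_div_smul_sub_succ [IsTopologicalAddGroup E]
    (hx : Tendsto (fun k : ℕ => (1 / (k : ℝ)) • x k) atTop (𝓝 a)) :
    Tendsto (fun k : ℕ => (1 / (k : ℝ)) • (x (k + 1) - x k)) atTop (𝓝 0) := by
  simpa [smul_sub] using hx.one_div_smul_succ_s19.sub hx

theorem Filter.Tendsto.one_div_smul_smul_sub_succ [IsTopologicalAddGroup E] (σ : ℝ)
    (hx : Tendsto (fun k : ℕ => (1 / (k : ℝ)) • x k) atTop (𝓝 a)) :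
    Tendsto (fun k : ℕ => (1 / (k : ℝ)) • σ • (x (k + 1) - x k)) atTop (𝓝 0) := by
  simpa [smul_comm σ] using hx.one_div_smul_sub_succ.const_smul σ

end Averages

section DotProduct

variable {ι κ α : Type*} [Fintype ι] {l : Filter α}

protected theorem Filter.Tendsto.dotProduct {x y : α → ι → ℝ} {a b : ι → ℝ}
    (hx : Tendsto x l (𝓝 a)) (hy : Tendsto y l (𝓝 b)) :
    Tendsto (fun k => x k ⬝ᵥ y k) l (𝓝 (a ⬝ᵥ b)) :=
  ((continuous_fst.dotProduct continuous_snd).tendsto (a, b)).comp (hx.prodMk_nhds hy)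

theorem Filter.Tendsto.one_div_smul_mulVec_succ (M : Matrix κ ι ℝ) {x : ℕ → ι → ℝ}
    {a : ι → ℝ} (hx : Tendsto (fun k : ℕ => (1 / (k : ℝ)) • x k) atTop (𝓝 a)) :
    Tendsto (fun k : ℕ => (1 / (k : ℝ)) • M *ᵥ x (k + 1)) atTop (𝓝 (M *ᵥ a)) := by
  simp_rw [← mulVec_smul]
  exact ((continuous_const.matrix_mulVec continuous_id).tendsto a).comp hx.one_div_smul_succ_s19

theorem mul_eq_zero_of_dotProduct_eq_zero_s19 {w u : ι → ℝ} (hw : 0 ≤ w) (hu : 0 ≤ u)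
    (hwu : w ⬝ᵥ u = 0) (i : ι) : w i * u i = 0 :=
  (Finset.sum_eq_zero_iff_of_nonneg fun j _ => mul_nonneg (hw j) (hu j)).mp hwu i
    (Finset.mem_univ i)

theorem eventually_dotProduct_eq_zero_of_mul_eq_zero {w u : α → ι → ℝ} {c : α → ℝ}
    {d : ι → ℝ} (hwu : ∀ k i, w k i * u k i = 0) (hu : Tendsto (fun k => c k • u k) l (𝓝 d)) :
    ∀ᶠ k in l, w k ⬝ᵥ d = 0 := by
  have hcomp : ∀ i, ∀ᶠ k in l, w k i * d i = 0 := by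
    intro i
    rcases eq_or_ne (d i) 0 with hdi | hdi
    · exact Eventually.of_forall fun k => by rw [hdi, mul_zero]
    filter_upwards [(tendsto_pi_nhds.mp hu i).eventually_ne hdi] with k hk
    have hui : u k i ≠ 0 := fun h0 => hk (by simp [h0])
    rw [(mul_eq_zero.mp (hwu k i)).resolve_right hui, zero_mul]
  filter_upwards [eventually_all.mpr hcomp] with k hk
  exact Finset.sum_eq_zero fun i _ => hk i

theorem dotProduct_self_add_dotProduct_self_pos [Fintype κ] {x : ι → ℝ} {y : κ → ℝ}
    (hxy : (x, y) ≠ (0, 0)) :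
    0 < x ⬝ᵥ x + y ⬝ᵥ y := by
  have hx : 0 ≤ x ⬝ᵥ x := Finset.sum_nonneg fun i _ => mul_self_nonneg (x i)
  have hy : 0 ≤ y ⬝ᵥ y := Finset.sum_nonneg fun i _ => mul_self_nonneg (y i)
  refine lt_of_le_of_ne (add_nonneg hx hy) fun h0 => hxy ?_
  rw [eq_comm, add_eq_zero_iff_of_nonneg hx hy, dotProduct_self_eq_zero,
    dotProduct_self_eq_zero] at h0
  rw [h0.1, h0.2]

end DotProduct

section Certificate

variable {n m q : Type*} [Fintype m] [Fintype q]

theorem mulVec_dotProduct_add_mulVec_dotProduct [Fintype n] (G : Matrix m n ℝ)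
    (A : Matrix q n ℝ) (x : n → ℝ) (μ : m → ℝ) (ν : q → ℝ) :
    (G *ᵥ x) ⬝ᵥ μ + (A *ᵥ x) ⬝ᵥ ν = x ⬝ᵥ (Gᵀ *ᵥ μ + Aᵀ *ᵥ ν) := by
  rw [dotProduct_add, dotProduct_comm, dotProduct_comm (A *ᵥ x), dotProduct_mulVec,
    dotProduct_mulVec, mulVec_transpose, mulVec_transpose, dotProduct_comm (μ ᵥ* G),
    dotProduct_comm (ν ᵥ* A)]

def IsInfeasibilityCertificate (G : Matrix m n ℝ) (h : m → ℝ) (A : Matrix q n ℝ) (b : q → ℝ)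
    (μ : m → ℝ) (ν : q → ℝ) : Prop :=
  0 ≤ ν ∧ Gᵀ *ᵥ μ + Aᵀ *ᵥ ν = 0 ∧ h ⬝ᵥ μ + b ⬝ᵥ ν < 0

theorem IsInfeasibilityCertificate.not_exists_feasible [Fintype n] {G : Matrix m n ℝ}
    {h : m → ℝ} {A : Matrix q n ℝ} {b : q → ℝ} {μ : m → ℝ} {ν : q → ℝ}
    (hc : IsInfeasibilityCertificate G h A b μ ν) :
    ¬ ∃ x, G *ᵥ x = h ∧ A *ᵥ x ≤ b := by
  rintro ⟨x, rfl, hAx⟩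
  obtain ⟨hν, hker, hneg⟩ := hc
  have hle := dotProduct_le_dotProduct_of_nonneg_right hAx hν
  have hzero := mulVec_dotProduct_add_mulVec_dotProduct G A x μ ν
  rw [hker, dotProduct_zero] at hzero
  linarith

end Certificate

section ProxSlack

variable {n q : Type*} [Fintype n]

def proxSlack (A : Matrix q n ℝ) (b : q → ℝ) (σ : ℝ) (z : ℕ → n → ℝ) (v : ℕ → q → ℝ)
    (k : ℕ) : q → ℝ :=
  b - A *ᵥ z (k + 1) + σ • (v (k + 1) - v k)

theorem tendsto_one_div_smul_proxSlack (A : Matrix q n ℝ) (b : q → ℝ) (σ : ℝ)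
    {z : ℕ → n → ℝ} {v : ℕ → q → ℝ} {δz : n → ℝ} {δv : q → ℝ}
    (hz : Tendsto (fun k : ℕ => (1 / (k : ℝ)) • z k) atTop (𝓝 δz))
    (hv : Tendsto (fun k : ℕ => (1 / (k : ℝ)) • v k) atTop (𝓝 δv)) :
    Tendsto (fun k : ℕ => (1 / (k : ℝ)) • proxSlack A b σ z v k) atTop (𝓝 (-(A *ᵥ δz))) := by
  have hlim := ((tendsto_one_div_smul_const b).sub (hz.one_div_smul_mulVec_succ A)).add
    (hv.one_div_smul_smul_sub_succ σ)
  simp only [← smul_sub, ← smul_add, zero_sub, add_zero] at hlim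
  exact hlim

end ProxSlack

/-- The optimality conditions of the `(k+1)`-st step of the proximal point method applied to the
KKT system of the QP; `proxSlack … k` is the slack of its inequality constraint. -/
structure IsProxMultiplierSeq {n m q : Type*} [Fintype n] [Fintype m] [Fintype q]
    (H : Matrix n n ℝ) (f : n → ℝ) (G : Matrix m n ℝ) (h : m → ℝ) (A : Matrix q n ℝ)
    (b : q → ℝ) (σ : ℝ) (z : ℕ → n → ℝ) (lam : ℕ → m → ℝ) (v : ℕ → q → ℝ) : Prop where
  stationarity : ∀ k, H *ᵥ z (k + 1) + f + Gᵀ *ᵥ lam (k + 1) + Aᵀ *ᵥ v (k + 1) +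
    σ • (z (k + 1) - z k) = 0
  equality : ∀ k, h - G *ᵥ z (k + 1) + σ • (lam (k + 1) - lam k) = 0
  complementarity : ∀ k, proxSlack A b σ z v k ⬝ᵥ v (k + 1) = 0
  dual_nonneg : ∀ k, 0 ≤ v (k + 1)
  slack_nonneg : ∀ k, 0 ≤ proxSlack A b σ z v k

namespace IsProxMultiplierSeq

variable {n m q : Type*} [Fintype n] [Fintype m] [Fintype q]
  {H : Matrix n n ℝ} {f : n → ℝ} {G : Matrix m n ℝ} {h : m → ℝ} {A : Matrix q n ℝ}
  {b : q → ℝ} {σ : ℝ} {z : ℕ → n → ℝ} {lam : ℕ → m → ℝ} {v : ℕ → q → ℝ}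
  {δz : n → ℝ} {δlam : m → ℝ} {δv : q → ℝ}

theorem equality_limit (hp : IsProxMultiplierSeq H f G h A b σ z lam v)
    (hz : Tendsto (fun k : ℕ => (1 / (k : ℝ)) • z k) atTop (𝓝 δz))
    (hlam : Tendsto (fun k : ℕ => (1 / (k : ℝ)) • lam k) atTop (𝓝 δlam)) :
    G *ᵥ δz = 0 := by
  have hlim := ((tendsto_one_div_smul_const h).sub (hz.one_div_smul_mulVec_succ G)).add
    (hlam.one_div_smul_smul_sub_succ σ)
  simp only [← smul_sub, ← smul_add, hp.equality, smul_zero] at hlim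
  simpa [eq_comm] using tendsto_nhds_unique tendsto_const_nhds hlim

theorem stationarity_limit (hp : IsProxMultiplierSeq H f G h A b σ z lam v)
    (hz : Tendsto (fun k : ℕ => (1 / (k : ℝ)) • z k) atTop (𝓝 δz))
    (hlam : Tendsto (fun k : ℕ => (1 / (k : ℝ)) • lam k) atTop (𝓝 δlam))
    (hv : Tendsto (fun k : ℕ => (1 / (k : ℝ)) • v k) atTop (𝓝 δv)) :
    H *ᵥ δz + Gᵀ *ᵥ δlam + Aᵀ *ᵥ δv = 0 := by
  have hlim := ((((hz.one_div_smul_mulVec_succ H).add (tendsto_one_div_smul_const f)).add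
    (hlam.one_div_smul_mulVec_succ Gᵀ)).add (hv.one_div_smul_mulVec_succ Aᵀ)).add
    (hz.one_div_smul_smul_sub_succ σ)
  simp only [← smul_add, hp.stationarity, smul_zero, add_zero] at hlim
  exact tendsto_nhds_unique hlim tendsto_const_nhds

theorem dual_limit_nonneg (hp : IsProxMultiplierSeq H f G h A b σ z lam v)
    (hv : Tendsto (fun k : ℕ => (1 / (k : ℝ)) • v k) atTop (𝓝 δv)) : 0 ≤ δv :=
  ge_of_tendsto' hv.one_div_smul_succ_s19 fun k => smul_nonneg (by positivity) (hp.dual_nonneg k)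

theorem eventually_proxSlack_dotProduct_eq_zero
    (hp : IsProxMultiplierSeq H f G h A b σ z lam v)
    (hv : Tendsto (fun k : ℕ => (1 / (k : ℝ)) • v k) atTop (𝓝 δv)) :
    ∀ᶠ k in atTop, proxSlack A b σ z v k ⬝ᵥ δv = 0 :=
  eventually_dotProduct_eq_zero_of_mul_eq_zero
    (fun k => mul_eq_zero_of_dotProduct_eq_zero_s19 (hp.slack_nonneg k) (hp.dual_nonneg k)
      (hp.complementarity k))
    hv.one_div_smul_succ_s19

theorem complementarity_limit (hp : IsProxMultiplierSeq H f G h A b σ z lam v)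
    (hz : Tendsto (fun k : ℕ => (1 / (k : ℝ)) • z k) atTop (𝓝 δz))
    (hv : Tendsto (fun k : ℕ => (1 / (k : ℝ)) • v k) atTop (𝓝 δv)) :
    (A *ᵥ δz) ⬝ᵥ δv = 0 := by
  have hlim :=
    (tendsto_one_div_smul_proxSlack A b σ hz hv).dotProduct (tendsto_const_nhds (x := δv))
  have hzero : ∀ᶠ k : ℕ in atTop, ((1 / (k : ℝ)) • proxSlack A b σ z v k) ⬝ᵥ δv = 0 := by
    filter_upwards [hp.eventually_proxSlack_dotProduct_eq_zero hv] with k hk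
    rw [smul_dotProduct, hk, smul_zero]
  simpa using tendsto_nhds_unique (hlim.congr' hzero) tendsto_const_nhds

theorem transpose_mulVec_add_eq_zero (hp : IsProxMultiplierSeq H f G h A b σ z lam v)
    (hH : H.PosSemidef) (hz : Tendsto (fun k : ℕ => (1 / (k : ℝ)) • z k) atTop (𝓝 δz))
    (hlam : Tendsto (fun k : ℕ => (1 / (k : ℝ)) • lam k) atTop (𝓝 δlam))
    (hv : Tendsto (fun k : ℕ => (1 / (k : ℝ)) • v k) atTop (𝓝 δv)) :
    Gᵀ *ᵥ δlam + Aᵀ *ᵥ δv = 0 := by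
  have hstat := hp.stationarity_limit hz hlam hv
  have hcurv : δz ⬝ᵥ H *ᵥ δz = 0 := by
    have hdot := congrArg (δz ⬝ᵥ ·) hstat
    rwa [add_assoc, dotProduct_add, ← mulVec_dotProduct_add_mulVec_dotProduct,
      hp.equality_limit hz hlam, hp.complementarity_limit hz hv, zero_dotProduct, add_zero,
      add_zero, dotProduct_zero] at hdot
  have hHδz : H *ᵥ δz = 0 := (hH.dotProduct_mulVec_zero_iff δz).mp (by simpa using hcurv)
  rwa [hHδz, zero_add] at hstat

theorem eventually_value_eq (hp : IsProxMultiplierSeq H f G h A b σ z lam v)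
    (hH : H.PosSemidef) (hz : Tendsto (fun k : ℕ => (1 / (k : ℝ)) • z k) atTop (𝓝 δz))
    (hlam : Tendsto (fun k : ℕ => (1 / (k : ℝ)) • lam k) atTop (𝓝 δlam))
    (hv : Tendsto (fun k : ℕ => (1 / (k : ℝ)) • v k) atTop (𝓝 δv)) :
    ∀ᶠ k in atTop, h ⬝ᵥ δlam + b ⬝ᵥ δv =
      -(σ * ((lam (k + 1) - lam k) ⬝ᵥ δlam + (v (k + 1) - v k) ⬝ᵥ δv)) := by
  filter_upwards [hp.eventually_proxSlack_dotProduct_eq_zero hv] with k hk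
  have hh : h = G *ᵥ z (k + 1) - σ • (lam (k + 1) - lam k) := by
    rw [eq_sub_iff_add_eq, ← sub_eq_zero, ← hp.equality k]
    abel
  have hb : b = A *ᵥ z (k + 1) - σ • (v (k + 1) - v k) + proxSlack A b σ z v k := by
    rw [proxSlack]
    abel
  have hker := mulVec_dotProduct_add_mulVec_dotProduct G A (z (k + 1)) δlam δv
  rw [hp.transpose_mulVec_add_eq_zero hH hz hlam hv, dotProduct_zero] at hker
  rw [hh, hb]
  simp only [sub_dotProduct, add_dotProduct, smul_dotProduct, smul_eq_mul]
  linear_combination hker + hk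

theorem isInfeasibilityCertificate (hp : IsProxMultiplierSeq H f G h A b σ z lam v)
    (hH : H.PosSemidef) (hσ : 0 < σ)
    (hz : Tendsto (fun k : ℕ => (1 / (k : ℝ)) • z k) atTop (𝓝 δz))
    (hlam : Tendsto (fun k : ℕ => (1 / (k : ℝ)) • lam k) atTop (𝓝 δlam))
    (hv : Tendsto (fun k : ℕ => (1 / (k : ℝ)) • v k) atTop (𝓝 δv))
    (hdlam : Tendsto (fun k => lam (k + 1) - lam k) atTop (𝓝 δlam))
    (hdv : Tendsto (fun k => v (k + 1) - v k) atTop (𝓝 δv)) (hne : (δlam, δv) ≠ (0, 0)) :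
    IsInfeasibilityCertificate G h A b δlam δv := by
  have hlim := ((hdlam.dotProduct (tendsto_const_nhds (x := δlam))).add
    (hdv.dotProduct (tendsto_const_nhds (x := δv)))).const_mul σ |>.neg
  have hvalue : h ⬝ᵥ δlam + b ⬝ᵥ δv = -(σ * (δlam ⬝ᵥ δlam + δv ⬝ᵥ δv)) :=
    tendsto_nhds_unique (tendsto_const_nhds.congr' (hp.eventually_value_eq hH hz hlam hv)) hlim
  refine ⟨hp.dual_limit_nonneg hv, hp.transpose_mulVec_add_eq_zero hH hz hlam hv, ?_⟩
  rw [hvalue, neg_lt_zero]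
  exact mul_pos hσ (dotProduct_self_add_dotProduct_self_pos hne)

end IsProxMultiplierSeq

theorem prox_primal_infeasibility_detection_general (n m q : ℕ)
    (H : Matrix (Fin n) (Fin n) ℝ) (hH : H.PosSemidef)
    (f : Fin n → ℝ) (G : Matrix (Fin m) (Fin n) ℝ) (h : Fin m → ℝ)
    (A : Matrix (Fin q) (Fin n) ℝ) (b : Fin q → ℝ)
    (σ : ℝ) (hσ : 0 < σ)
    (z : ℕ → Fin n → ℝ) (lam : ℕ → Fin m → ℝ) (v : ℕ → Fin q → ℝ)
    (heq1 : ∀ k : ℕ, H.mulVec (z (k + 1)) + f + Gᵀ.mulVec (lam (k + 1)) +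
      Aᵀ.mulVec (v (k + 1)) + σ • (z (k + 1) - z k) = 0)
    (heq2 : ∀ k : ℕ, h - G.mulVec (z (k + 1)) + σ • (lam (k + 1) - lam k) = 0)
    (heq3 : ∀ k : ℕ, (b - A.mulVec (z (k + 1)) + σ • (v (k + 1) - v k)) ⬝ᵥ v (k + 1) = 0)
    (heq4 : ∀ k : ℕ, 0 ≤ v (k + 1))
    (heq5 : ∀ k : ℕ, 0 ≤ b - A.mulVec (z (k + 1)) + σ • (v (k + 1) - v k))
    (δz : Fin n → ℝ) (δlam : Fin m → ℝ) (δv : Fin q → ℝ)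
    (hd2 : Tendsto (fun k => lam (k + 1) - lam k) atTop (𝓝 δlam))
    (hd3 : Tendsto (fun k => v (k + 1) - v k) atTop (𝓝 δv))
    (ha1 : Tendsto (fun k : ℕ => (1 / (k : ℝ)) • z k) atTop (𝓝 δz))
    (ha2 : Tendsto (fun k : ℕ => (1 / (k : ℝ)) • lam k) atTop (𝓝 δlam))
    (ha3 : Tendsto (fun k : ℕ => (1 / (k : ℝ)) • v k) atTop (𝓝 δv)) :
    (δlam, δv) ≠ (0, 0) →
      (¬ ∃ zf : Fin n → ℝ, G.mulVec zf = h ∧ A.mulVec zf ≤ b) ∧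
      0 ≤ δv ∧ Gᵀ.mulVec δlam + Aᵀ.mulVec δv = 0 ∧ h ⬝ᵥ δlam + b ⬝ᵥ δv < 0 := by
  intro hne
  have hp : IsProxMultiplierSeq H f G h A b σ z lam v := ⟨heq1, heq2, heq3, heq4, heq5⟩
  have hcert := hp.isInfeasibilityCertificate hH hσ ha1 ha2 ha3 hd2 hd3 hne
  exact ⟨hcert.not_exists_feasible, hcert⟩

/-- Infeasibility detection, primal case: if `(δλ, δv) ≠ (0,0)` then the primal
QP is infeasible and `(δλ, δv)` is a certificate of primal infeasibility. -/
theorem prox_primal_infeasibility_detection (n m q : ℕ)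
    (H : Matrix (Fin n) (Fin n) ℝ) (hH : H.PosSemidef)
    (f : Fin n → ℝ) (G : Matrix (Fin m) (Fin n) ℝ) (h : Fin m → ℝ)
    (A : Matrix (Fin q) (Fin n) ℝ) (b : Fin q → ℝ)
    (σ : ℝ) (hσ : 0 < σ)
    (z : ℕ → Fin n → ℝ) (lam : ℕ → Fin m → ℝ) (v : ℕ → Fin q → ℝ)
    (heq1 : ∀ k : ℕ, H.mulVec (z (k + 1)) + f + Gᵀ.mulVec (lam (k + 1)) +
      Aᵀ.mulVec (v (k + 1)) + σ • (z (k + 1) - z k) = 0)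
    (heq2 : ∀ k : ℕ, h - G.mulVec (z (k + 1)) + σ • (lam (k + 1) - lam k) = 0)
    (heq3 : ∀ k : ℕ, (b - A.mulVec (z (k + 1)) + σ • (v (k + 1) - v k)) ⬝ᵥ v (k + 1) = 0)
    (heq4 : ∀ k : ℕ, 0 ≤ v (k + 1))
    (heq5 : ∀ k : ℕ, 0 ≤ b - A.mulVec (z (k + 1)) + σ • (v (k + 1) - v k))
    (δz : Fin n → ℝ) (δlam : Fin m → ℝ) (δv : Fin q → ℝ)
    (hd1 : Tendsto (fun k => z (k + 1) - z k) atTop (𝓝 δz))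
    (hd2 : Tendsto (fun k => lam (k + 1) - lam k) atTop (𝓝 δlam))
    (hd3 : Tendsto (fun k => v (k + 1) - v k) atTop (𝓝 δv))
    (ha1 : Tendsto (fun k : ℕ => (1 / (k : ℝ)) • z k) atTop (𝓝 δz))
    (ha2 : Tendsto (fun k : ℕ => (1 / (k : ℝ)) • lam k) atTop (𝓝 δlam))
    (ha3 : Tendsto (fun k : ℕ => (1 / (k : ℝ)) • v k) atTop (𝓝 δv)) :
    (δlam, δv) ≠ (0, 0) →
      (¬ ∃ zf : Fin n → ℝ, G.mulVec zf = h ∧ A.mulVec zf ≤ b) ∧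
      0 ≤ δv ∧ Gᵀ.mulVec δlam + Aᵀ.mulVec δv = 0 ∧ h ⬝ᵥ δlam + b ⬝ᵥ δv < 0 :=
  prox_primal_infeasibility_detection_general n m q H hH f G h A b σ hσ z lam v heq1 heq2 heq3 heq4
    heq5 δz δlam δv hd2 hd3 ha1 ha2 ha3
end
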